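/- arXiv:1706.00033 — 8 statements merged into one kernel-verified Lean document; each statement's English description precedes it below -/
import Mathlib

section
/- Let α be a monotone self-map of {0,...,n-1} with image in A = {a_0 < ... < a_{k-1}}, with block lengths (i_0,...,i_{k-1}) summing to n, and fix 0 ≤ ℓ < m ≤ k−1. Define the projection ∂(α) to be the step function taking value a_ℓ on the first Σ_{p=0}^{ℓ} i_p points, value a_s on i_s points for ℓ < s < m, and value a_m on the last Σ_{p=m}^{k-1} i_p points. Then ∂ is additive: ∂(α + β) = ∂(α) + ∂(β) for all such α, β, where + is pointwise maximum. -/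
/-- `IsStep n k a i α` : `α t = a s` whenever `∑_{p<s} i p ≤ t < ∑_{p≤s} i p`, for `s < k`. -/
def IsStep (n k : ℕ) (a : ℕ → Fin n) (i : ℕ → ℕ) (α : Fin n → Fin n) : Prop :=
  ∀ s < k, ∀ t : Fin n,
    ∑ p ∈ Finset.range s, i p ≤ t.val → t.val < ∑ p ∈ Finset.range (s + 1), i p → α t = a s

/-- Block lengths of the projection onto `σ{a_ℓ,…,a_m}`: the first `ℓ+1` blocks are merged
into a single `a_ℓ`-block of length `∑_{p=0}^{ℓ} i p`, middle blocks are kept, and the last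
`k-m` blocks are merged into an `a_m`-block of length `∑_{p=m}^{k-1} i p`. -/
def mergedLen (i : ℕ → ℕ) (l m k : ℕ) : ℕ → ℕ := fun s =>
  if s = 0 then ∑ p ∈ Finset.range (l + 1), i p
  else if s < m - l then i (l + s)
  else if s = m - l then ∑ p ∈ Finset.Ico m k, i p
  else 0

/-
If `t` lies in block `s` of `α`, then `∂α` takes the value `a_{max ℓ (min s m)}` at `t`,
because the block boundaries of `∂α` are among those of `α`. The index of the block of `α + β`
containing `t` is the larger of those for `α` and `β` (the `a_s` are strictly increasing), and
clamping into `[ℓ, m]` is monotone, so it commutes with `max`.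
-/

open Finset

lemma exists_lt_sum_range_succ_of_lt_sum_range (i : ℕ → ℕ) {k x : ℕ}
    (hx : x < ∑ p ∈ range k, i p) :
    ∃ s < k, ∑ p ∈ range s, i p ≤ x ∧ x < ∑ p ∈ range (s + 1), i p := by
  induction k with
  | zero => simp at hx
  | succ k ih =>
    by_cases hk : x < ∑ p ∈ range k, i p
    · obtain ⟨s, hs, hsx⟩ := ih hk
      exact ⟨s, hs.trans k.lt_succ_self, hsx⟩
    · exact ⟨k, k.lt_succ_self, not_lt.mp hk, hx⟩

section mergedLen

variable (i : ℕ → ℕ) {l m k : ℕ}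

lemma sum_range_mergedLen {u : ℕ} (hu : 1 ≤ u) (hum : u ≤ m - l) :
    ∑ p ∈ range u, mergedLen i l m k p = ∑ p ∈ range (l + u), i p := by
  induction u, hu using Nat.le_induction with
  | base => simp [mergedLen]
  | succ v hv ih =>
    have hmerged : mergedLen i l m k v = i (l + v) := by
      rw [mergedLen, if_neg (by omega), if_pos (by omega)]
    rw [sum_range_succ, ih (by omega), hmerged, ← add_assoc, sum_range_succ]

lemma sum_range_mergedLen_total (hlm : l < m) (hmk : m ≤ k) :
    ∑ p ∈ range (m - l + 1), mergedLen i l m k p = ∑ p ∈ range k, i p := by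
  have hlast : mergedLen i l m k (m - l) = ∑ p ∈ Ico m k, i p := by
    rw [mergedLen, if_neg (by omega), if_neg (by omega), if_pos rfl]
  rw [sum_range_succ, sum_range_mergedLen i (by omega) le_rfl, hlast,
    Nat.add_sub_cancel' hlm.le, sum_range_add_sum_Ico _ hmk]

end mergedLen

lemma IsStep.mergedLen_apply {n k l m : ℕ} (hlm : l < m) (hmk : m ≤ k) {a : ℕ → Fin n}
    {i : ℕ → ℕ} (hi : ∑ p ∈ range k, i p = n) {D : Fin n → Fin n}
    (hD : IsStep n (m - l + 1) (fun s => a (l + s)) (mergedLen i l m k) D)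
    {t : Fin n} {s : ℕ} (hst : ∑ p ∈ range s, i p ≤ t)
    (hts : t < ∑ p ∈ range (s + 1), i p) :
    D t = a (max l (min s m)) := by
  set u := min (m - l) (s - l)
  have hclamp : l + u = max l (min s m) := by omega
  rw [← hclamp]
  refine hD u (by omega) t ?_ ?_
  · rcases Nat.eq_zero_or_pos u with hu | hu
    · simp [hu]
    · rw [sum_range_mergedLen i hu (by omega)]
      exact (sum_le_sum_of_subset (range_subset_range.mpr (by omega))).trans hst
  · rcases Nat.lt_or_ge u (m - l) with hu | hu
    · rw [sum_range_mergedLen i (by omega) hu]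
      exact hts.trans_le (sum_le_sum_of_subset (range_subset_range.mpr (by omega)))
    · rw [show u = m - l by omega, sum_range_mergedLen_total i hlm hmk, hi]
      exact t.isLt

lemma StrictMonoOn.monotone_comp_clamp {β : Type*} [Preorder β] {a : ℕ → β} {k l m : ℕ}
    (ha : StrictMonoOn a (Set.Iio k)) (hlm : l < m) (hmk : m < k) :
    Monotone fun s => a (max l (min s m)) := fun p q hpq =>
  ha.monotoneOn (by simp; omega) (by simp; omega) (by omega)

theorem stmt4_general (n k l m : ℕ) (hlm : l < m) (hmk : m ≤ k - 1)
    (a : ℕ → Fin n) (ha : ∀ p q : ℕ, p < q → q < k → a p < a q)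
    (i j hseq : ℕ → ℕ)
    (hi : ∑ p ∈ Finset.range k, i p = n)
    (hj : ∑ p ∈ Finset.range k, j p = n)
    (hhs : ∑ p ∈ Finset.range k, hseq p = n)
    (α β : Fin n → Fin n)
    (hα : IsStep n k a i α)
    (hβ : IsStep n k a j β)
    -- `hseq` is the block-length sequence of the sum `α + β`
    (hsum : IsStep n k a hseq (fun t => max (α t) (β t)))
    (Dα Dβ Dγ : Fin n → Fin n)
    (hDα : IsStep n (m - l + 1) (fun s => a (l + s)) (mergedLen i l m k) Dα)
    (hDβ : IsStep n (m - l + 1) (fun s => a (l + s)) (mergedLen j l m k) Dβ)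
    (hDγ : IsStep n (m - l + 1) (fun s => a (l + s)) (mergedLen hseq l m k) Dγ) :
    -- ∂(α + β) = ∂(α) + ∂(β)
    Dγ = fun t => max (Dα t) (Dβ t) := by
  have hmk' : m < k := by omega
  have ha' : StrictMonoOn a (Set.Iio k) := fun p _ q hq hpq => ha p q hpq hq
  funext t
  have ht : ∀ b : ℕ → ℕ, ∑ p ∈ range k, b p = n → t.val < ∑ p ∈ range k, b p :=
    fun _ hb => hb ▸ t.isLt
  obtain ⟨sα, hsα, hα₁, hα₂⟩ := exists_lt_sum_range_succ_of_lt_sum_range i (ht i hi)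
  obtain ⟨sβ, hsβ, hβ₁, hβ₂⟩ := exists_lt_sum_range_succ_of_lt_sum_range j (ht j hj)
  obtain ⟨sγ, hsγ, hγ₁, hγ₂⟩ :=
    exists_lt_sum_range_succ_of_lt_sum_range hseq (ht hseq hhs)
  have hsγ_eq : sγ = max sα sβ := ha'.injOn hsγ (max_lt hsα hsβ) <| calc
    a sγ = max (α t) (β t) := (hsum sγ hsγ t hγ₁ hγ₂).symm
    _ = max (a sα) (a sβ) := by rw [hα sα hsα t hα₁ hα₂, hβ sβ hsβ t hβ₁ hβ₂]
    _ = a (max sα sβ) := (ha'.monotoneOn.map_max hsα hsβ).symm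
  rw [hDγ.mergedLen_apply hlm hmk'.le hhs hγ₁ hγ₂, hsγ_eq,
    hDα.mergedLen_apply hlm hmk'.le hi hα₁ hα₂,
    hDβ.mergedLen_apply hlm hmk'.le hj hβ₁ hβ₂,
    (ha'.monotone_comp_clamp hlm hmk').map_max]

theorem stmt4 (n k l m : ℕ) (hlm : l < m) (hmk : m ≤ k - 1) (hk : 0 < k)
    (a : ℕ → Fin n) (ha : ∀ p q : ℕ, p < q → q < k → a p < a q)
    (i j hseq : ℕ → ℕ)
    (hi : ∑ p ∈ Finset.range k, i p = n)
    (hj : ∑ p ∈ Finset.range k, j p = n)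
    (hhs : ∑ p ∈ Finset.range k, hseq p = n)
    (α β : Fin n → Fin n)
    (hα : IsStep n k a i α) (hmα : Monotone α)
    (hβ : IsStep n k a j β) (hmβ : Monotone β)
    -- `hseq` is the block-length sequence of the sum `α + β`
    (hsum : IsStep n k a hseq (fun t => max (α t) (β t)))
    (Dα Dβ Dγ : Fin n → Fin n)
    (hDα : IsStep n (m - l + 1) (fun s => a (l + s)) (mergedLen i l m k) Dα)
    (hDβ : IsStep n (m - l + 1) (fun s => a (l + s)) (mergedLen j l m k) Dβ)
    (hDγ : IsStep n (m - l + 1) (fun s => a (l + s)) (mergedLen hseq l m k) Dγ) :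
    -- ∂(α + β) = ∂(α) + ∂(β)
    Dγ = fun t => max (Dα t) (Dβ t) :=
  stmt4_general n k l m hlm hmk a ha i j hseq hi hj hhs α β hα hβ hsum Dα Dβ Dγ hDα hDβ hDγ
end

section
/- Fix A = {a_0 < ... < a_{k-1}} ⊆ {0,...,n-1} and 0 ≤ ℓ < m ≤ k−1. The set S = { α monotone with image in A : α(a_0) = α(a_1) = ... = α(a_ℓ) ≥ a_{ℓ+1} and α(a_m) ≤ a_m } is closed under pointwise maximum and under composition (α·β)(x) = β(α(x)). -/
/-- Membership in `S` : `α` is monotone with image in `A = {a_0 < … < a_{k-1}}`,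
`α(a_0) = … = α(a_ℓ) ≥ a_{ℓ+1}` and `α(a_m) ≤ a_m`. -/
def memS (n k l m : ℕ) (a : ℕ → Fin n) (α : Fin n → Fin n) : Prop :=
  Monotone α ∧ (∀ t : Fin n, ∃ s < k, α t = a s) ∧
    (∀ p ≤ l, α (a p) = α (a 0)) ∧ a (l + 1) ≤ α (a 0) ∧ α (a m) ≤ a m

namespace memS

variable {n k l m : ℕ} {a : ℕ → Fin n} {α β : Fin n → Fin n}

theorem sup (hα : memS n k l m a α) (hβ : memS n k l m a β) :
    memS n k l m a (fun x => max (α x) (β x)) := by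
  obtain ⟨hα_mono, hα_img, hα_const, hα_low, hα_fix⟩ := hα
  obtain ⟨hβ_mono, hβ_img, hβ_const, -, hβ_fix⟩ := hβ
  refine ⟨hα_mono.max hβ_mono, fun t => ?_, fun p hp => by simp only [hα_const p hp, hβ_const p hp],
    hα_low.trans (le_max_left _ _), max_le hα_fix hβ_fix⟩
  show ∃ s < k, max (α t) (β t) = a s
  rcases max_choice (α t) (β t) with h | h <;> rw [h]
  exacts [hα_img t, hβ_img t]

/-- Since `α (a 0) ∈ A` lies above `a 0`, monotonicity of `β` lifts `a (l + 1) ≤ β (a 0)` to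
`β (α (a 0))`. -/
theorem comp (ha : ∀ s < k, a 0 ≤ a s) (hα : memS n k l m a α) (hβ : memS n k l m a β) :
    memS n k l m a (fun x => β (α x)) := by
  obtain ⟨hα_mono, hα_img, hα_const, -, hα_fix⟩ := hα
  obtain ⟨hβ_mono, hβ_img, -, hβ_low, hβ_fix⟩ := hβ
  obtain ⟨s, hs, hα0⟩ := hα_img (a 0)
  refine ⟨hβ_mono.comp hα_mono, fun t => hβ_img (α t), fun p hp => congrArg β (hα_const p hp),
    hβ_low.trans (hβ_mono (hα0 ▸ ha s hs)), (hβ_mono hα_fix).trans hβ_fix⟩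

end memS

theorem stmt6_general (n k l m : ℕ)
    (a : ℕ → Fin n) (ha : ∀ p q : ℕ, p < q → q < k → a p < a q)
    (α β : Fin n → Fin n) (hα : memS n k l m a α) (hβ : memS n k l m a β) :
    -- closure under pointwise maximum
    memS n k l m a (fun x => max (α x) (β x)) ∧
    -- closure under composition (α·β)(x) = β(α(x))
    memS n k l m a (fun x => β (α x)) := by
  have ha0 : ∀ s < k, a 0 ≤ a s := fun s hs =>
    s.eq_zero_or_pos.elim (fun h => h ▸ le_rfl) fun h => (ha 0 s h hs).le
  exact ⟨hα.sup hβ, hα.comp ha0 hβ⟩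

theorem stmt6 (n k l m : ℕ) (hlm : l < m) (hmk : m ≤ k - 1) (hk : 0 < k)
    (a : ℕ → Fin n) (ha : ∀ p q : ℕ, p < q → q < k → a p < a q)
    (α β : Fin n → Fin n) (hα : memS n k l m a α) (hβ : memS n k l m a β) :
    -- closure under pointwise maximum
    memS n k l m a (fun x => max (α x) (β x)) ∧
    -- closure under composition (α·β)(x) = β(α(x))
    memS n k l m a (fun x => β (α x)) :=
  stmt6_general n k l m a ha α β hα hβ
end

section
/- With S = { α : α(a_0) = ... = α(a_ℓ) ≥ a_{ℓ+1}, α(a_m) ≤ a_m } and R = { α : α(a_ℓ) ≤ a_ℓ, α(a_m) ≤ a_m } inside the semiring of monotone self-maps of {0,...,n-1} with image in A = {a_0 < ... < a_{k-1}}, the sets S and R are disjoint and their union D = S ∪ R is closed under pointwise maximum and under composition; in particular, for α ∈ S and β ∈ R one has α + β ∈ S and β·α ∈ S (where (β·α)(x) = α(β(x))). -/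
/-- `R` : monotone, image in `A`, `α(a_ℓ) ≤ a_ℓ`, `α(a_m) ≤ a_m`. -/
def memR (n k l m : ℕ) (a : ℕ → Fin n) (α : Fin n → Fin n) : Prop :=
  Monotone α ∧ (∀ t : Fin n, ∃ s < k, α t = a s) ∧
    α (a l) ≤ a l ∧ α (a m) ≤ a m

/-- `D = S ∪ R`. -/
def memD (n k l m : ℕ) (a : ℕ → Fin n) (α : Fin n → Fin n) : Prop :=
  memS n k l m a α ∨ memR n k l m a α

/-! Write `A = {a_0 < … < a_{k-1}}`. Maps of `R` send `a_0, …, a_ℓ` into `{a_0, …, a_ℓ}`, while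
a map of `S` is constant on `{a_0, …, a_ℓ}` with a value at least `a_{ℓ+1}`. Hence a map of `R`
lies below a map of `S` on `a_0, …, a_ℓ`, which makes their maximum a map of `S`, and composing
a map of `S` after one of `R` again gives a map of `S`. Composing in the other order gives a map
that is constant on `a_0, …, a_ℓ`, and it lies in `S` or in `R` according as that constant value
exceeds `a_ℓ` or not. The remaining cases are immediate, and `S ∩ R = ∅` because
`a_{ℓ+1} ≤ α(a_0) = α(a_ℓ) ≤ a_ℓ` is impossible. -/

section

variable {n k l m : ℕ} {a : ℕ → Fin n} {α β : Fin n → Fin n}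

lemma forall_exists_max_eq (hα : ∀ t, ∃ s < k, α t = a s) (hβ : ∀ t, ∃ s < k, β t = a s) :
    ∀ t, ∃ s < k, max (α t) (β t) = a s := fun t => by
  rcases max_choice (α t) (β t) with h | h <;> rw [h]
  exacts [hα t, hβ t]

lemma memS.not_memR (ha : StrictMonoOn a (Set.Iio k)) (hl : l + 1 < k)
    (hα : memS n k l m a α) : ¬ memR n k l m a α := by
  rintro ⟨-, -, hαl, -⟩
  obtain ⟨-, -, hconst, hlow, -⟩ := hα
  have : a (l + 1) ≤ a l := hlow.trans ((hconst l le_rfl).symm.le.trans hαl)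
  exact this.not_gt (ha (Set.mem_Iio.2 (by omega)) hl (Nat.lt_succ_self l))

lemma memS.max_memS (hα : memS n k l m a α) (hβ : memS n k l m a β) :
    memS n k l m a (fun x => max (α x) (β x)) := by
  obtain ⟨hαmono, hαimg, hαconst, hαlow, hαm⟩ := hα
  obtain ⟨hβmono, hβimg, hβconst, -, hβm⟩ := hβ
  refine ⟨hαmono.max hβmono, forall_exists_max_eq hαimg hβimg, fun p hp => ?_,
    hαlow.trans (le_max_left _ _), max_le hαm hβm⟩
  simp only [hαconst p hp, hβconst p hp]

lemma memR.max_memR (hα : memR n k l m a α) (hβ : memR n k l m a β) :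
    memR n k l m a (fun x => max (α x) (β x)) := by
  obtain ⟨hαmono, hαimg, hαl, hαm⟩ := hα
  obtain ⟨hβmono, hβimg, hβl, hβm⟩ := hβ
  exact ⟨hαmono.max hβmono, forall_exists_max_eq hαimg hβimg, max_le hαl hβl, max_le hαm hβm⟩

lemma memR.le_of_memS (ha : StrictMonoOn a (Set.Iio k)) (hl : l + 1 < k)
    (hβ : memR n k l m a β) (hα : memS n k l m a α) {p : ℕ} (hp : p ≤ l) :
    β (a p) ≤ α (a p) :=
  calc β (a p) ≤ β (a l) := hβ.1 (ha.monotoneOn (Set.mem_Iio.2 (by omega)) (Set.mem_Iio.2 (by omega)) hp)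
    _ ≤ a l := hβ.2.2.1
    _ ≤ a (l + 1) := ha.monotoneOn (Set.mem_Iio.2 (by omega)) hl (Nat.le_succ l)
    _ ≤ α (a 0) := hα.2.2.2.1
    _ = α (a p) := (hα.2.2.1 p hp).symm

lemma memS.max_memR (ha : StrictMonoOn a (Set.Iio k)) (hl : l + 1 < k)
    (hα : memS n k l m a α) (hβ : memR n k l m a β) :
    memS n k l m a (fun x => max (α x) (β x)) := by
  have hmax : ∀ p ≤ l, max (α (a p)) (β (a p)) = α (a 0) := fun p hp => by
    rw [max_eq_left (hβ.le_of_memS ha hl hα hp), hα.2.2.1 p hp]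
  obtain ⟨hαmono, hαimg, -, hαlow, hαm⟩ := hα
  obtain ⟨hβmono, hβimg, -, hβm⟩ := hβ
  refine ⟨hαmono.max hβmono, forall_exists_max_eq hαimg hβimg, fun p hp => ?_, ?_,
    max_le hαm hβm⟩
  · simp only [hmax p hp, hmax 0 l.zero_le]
  · simpa only [hmax 0 l.zero_le] using hαlow

lemma memS.comp_memS (ha : StrictMonoOn a (Set.Iio k)) (hl : l + 1 < k)
    (hα : memS n k l m a α) (hβ : memS n k l m a β) :
    memS n k l m a (fun x => β (α x)) := by
  obtain ⟨hαmono, -, hαconst, hαlow, hαm⟩ := hα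
  obtain ⟨hβmono, hβimg, hβconst, hβlow, hβm⟩ := hβ
  have ha0 : a 0 ≤ α (a 0) :=
    (ha.monotoneOn (Set.mem_Iio.2 (by omega)) hl (l + 1).zero_le).trans hαlow
  refine ⟨hβmono.comp hαmono, fun t => hβimg (α t), fun p hp => ?_, ?_,
    (hβmono hαm).trans hβm⟩
  · simp only [hαconst p hp]
  · exact hβlow.trans ((hβconst 0 l.zero_le).symm.le.trans (hβmono ha0))

lemma memR.comp_memR (hα : memR n k l m a α) (hβ : memR n k l m a β) :
    memR n k l m a (fun x => β (α x)) := by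
  obtain ⟨hαmono, -, hαl, hαm⟩ := hα
  obtain ⟨hβmono, hβimg, hβl, hβm⟩ := hβ
  exact ⟨hβmono.comp hαmono, fun t => hβimg (α t), (hβmono hαl).trans hβl,
    (hβmono hαm).trans hβm⟩

lemma memR.exists_eq_of_le (ha : StrictMonoOn a (Set.Iio k)) (hl : l < k)
    (hα : memR n k l m a α) {p : ℕ} (hp : p ≤ l) : ∃ s ≤ l, α (a p) = a s := by
  obtain ⟨s, hs, hαs⟩ := hα.2.1 (a p)
  refine ⟨s, (ha.le_iff_le hs hl).1 ?_, hαs⟩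
  calc a s = α (a p) := hαs.symm
    _ ≤ α (a l) := hα.1 (ha.monotoneOn (Set.mem_Iio.2 (by omega)) hl hp)
    _ ≤ a l := hα.2.2.1

lemma memR.comp_memS (ha : StrictMonoOn a (Set.Iio k)) (hl : l + 1 < k)
    (hα : memR n k l m a α) (hβ : memS n k l m a β) :
    memS n k l m a (fun x => β (α x)) := by
  have hconst : ∀ p ≤ l, β (α (a p)) = β (a 0) := fun p hp => by
    obtain ⟨s, hs, hαs⟩ := hα.exists_eq_of_le ha (by omega) hp
    rw [hαs, hβ.2.2.1 s hs]
  obtain ⟨hαmono, -, -, hαm⟩ := hα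
  obtain ⟨hβmono, hβimg, -, hβlow, hβm⟩ := hβ
  refine ⟨hβmono.comp hαmono, fun t => hβimg (α t), fun p hp => ?_, ?_,
    (hβmono hαm).trans hβm⟩
  · simp only [hconst p hp, hconst 0 l.zero_le]
  · simpa only [hconst 0 l.zero_le] using hβlow

lemma memS.comp_memR (ha : StrictMonoOn a (Set.Iio k)) (hl : l + 1 < k)
    (hα : memS n k l m a α) (hβ : memR n k l m a β) :
    memD n k l m a (fun x => β (α x)) := by
  obtain ⟨hαmono, -, hαconst, -, hαm⟩ := hα
  obtain ⟨hβmono, hβimg, -, hβm⟩ := hβ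
  have hmono : Monotone fun x => β (α x) := hβmono.comp hαmono
  have hcm : β (α (a m)) ≤ a m := (hβmono hαm).trans hβm
  rcases le_or_gt (β (α (a 0))) (a l) with hle | hgt
  · refine Or.inr ⟨hmono, fun t => hβimg (α t), ?_, hcm⟩
    simpa only [hαconst l le_rfl] using hle
  · refine Or.inl ⟨hmono, fun t => hβimg (α t), fun p hp => ?_, ?_, hcm⟩
    · simp only [hαconst p hp]
    · obtain ⟨s, hs, hβs⟩ := hβimg (α (a 0))
      show a (l + 1) ≤ β (α (a 0))
      rw [hβs] at hgt ⊢
      have hls : l < s := (ha.lt_iff_lt (Set.mem_Iio.2 (by omega)) hs).1 hgt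
      exact ha.monotoneOn hl hs hls
end

theorem stmt8_general (n k l m : ℕ) (hlm : l < m) (hmk : m ≤ k - 1)
    (a : ℕ → Fin n) (ha : ∀ p q : ℕ, p < q → q < k → a p < a q) :
    -- S and R are disjoint
    (∀ α : Fin n → Fin n, ¬ (memS n k l m a α ∧ memR n k l m a α)) ∧
    -- D = S ∪ R is closed under pointwise maximum and under composition
    (∀ α β : Fin n → Fin n, memD n k l m a α → memD n k l m a β →
      memD n k l m a (fun x => max (α x) (β x)) ∧ memD n k l m a (fun x => β (α x))) ∧
    -- for α ∈ S, β ∈ R : α + β ∈ S and β·α ∈ S, where (β·α)(x) = α(β(x))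
    (∀ α β : Fin n → Fin n, memS n k l m a α → memR n k l m a β →
      memS n k l m a (fun x => max (α x) (β x)) ∧ memS n k l m a (fun x => α (β x))) := by
  have hsm : StrictMonoOn a (Set.Iio k) := fun p _ q hq hpq => ha p q hpq hq
  have hl : l + 1 < k := by omega
  refine ⟨fun α h => h.1.not_memR hsm hl h.2, ?_,
    fun α β hα hβ => ⟨hα.max_memR hsm hl hβ, hβ.comp_memS hsm hl hα⟩⟩
  rintro α β (hα | hα) (hβ | hβ)
  · exact ⟨Or.inl (hα.max_memS hβ), Or.inl (hα.comp_memS hsm hl hβ)⟩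
  · exact ⟨Or.inl (hα.max_memR hsm hl hβ), hα.comp_memR hsm hl hβ⟩
  · exact ⟨Or.inl (funext (fun x => max_comm (β x) (α x)) ▸ hβ.max_memR hsm hl hα),
      Or.inl (hα.comp_memS hsm hl hβ)⟩
  · exact ⟨Or.inr (hα.max_memR hβ), Or.inr (hα.comp_memR hβ)⟩

theorem stmt8 (n k l m : ℕ) (hlm : l < m) (hmk : m ≤ k - 1) (hk : 0 < k)
    (a : ℕ → Fin n) (ha : ∀ p q : ℕ, p < q → q < k → a p < a q) :
    -- S and R are disjoint
    (∀ α : Fin n → Fin n, ¬ (memS n k l m a α ∧ memR n k l m a α)) ∧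
    -- D = S ∪ R is closed under pointwise maximum and under composition
    (∀ α β : Fin n → Fin n, memD n k l m a α → memD n k l m a β →
      memD n k l m a (fun x => max (α x) (β x)) ∧ memD n k l m a (fun x => β (α x))) ∧
    -- for α ∈ S, β ∈ R : α + β ∈ S and β·α ∈ S, where (β·α)(x) = α(β(x))
    (∀ α β : Fin n → Fin n, memS n k l m a α → memR n k l m a β →
      memS n k l m a (fun x => max (α x) (β x)) ∧ memS n k l m a (fun x => α (β x))) :=
  stmt8_general n k l m hlm hmk a ha
end

section
/- Let D = S ∪ R, where S = { α : α(a_0) = ... = α(a_ℓ) ≥ a_{ℓ+1}, α(a_m) ≤ a_m } and R = { α : α(a_ℓ) ≤ a_ℓ, α(a_m) ≤ a_m } inside the semiring of monotone self-maps of {0,...,n-1} with image in A = {a_0 < ... < a_{k-1}}, and let ∂ be the projection ∂(α)(t) = max(a_ℓ, min(α(t), a_m)). Then ∂ satisfies the Leibniz rule on D: for all α, β ∈ D, ∂(α·β) = ∂(α)·β + α·∂(β), where (α·β)(x) = β(α(x)) and + is pointwise maximum. Hence ∂ is a derivation on D. -/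
/-- The projection `∂(α)(t) = max(a_ℓ, min(α(t), a_m))`. -/
def proj (n l m : ℕ) (a : ℕ → Fin n) (α : Fin n → Fin n) : Fin n → Fin n :=
  fun t => max (a l) (min (α t) (a m))

/-!
Write `clamp y = max a_ℓ (min y a_m)`. At `x`, the left side `∂(α·β)(x) = clamp (β (α x))` is the
second summand on the right, so the Leibniz rule says exactly that `β (clamp y) ≤ clamp (β y)` for
`y = α x ∈ A`. Above `a_m` this is `β(a_m) ≤ a_m`, between the bounds it is monotonicity, and below
`a_ℓ` it is `β(a_ℓ) ≤ a_ℓ` for `β ∈ R`, while for `β ∈ S` the map `β` is constant on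
`a_0, …, a_ℓ`, so `β(a_ℓ) = β y`.
-/

theorem Monotone.apply_clamp_le_clamp_apply {α : Type*} [LinearOrder α] {f : α → α}
    (hf : Monotone f) {lo hi y : α} (hle : lo ≤ hi) (hhi : f hi ≤ hi)
    (hlo : y < lo → f lo ≤ lo ∨ f lo ≤ f y) :
    f (max lo (min y hi)) ≤ max lo (min (f y) hi) := by
  rcases le_or_gt y hi with hyhi | hhiy
  · have hfy : f y ≤ hi := (hf hyhi).trans hhi
    rw [min_eq_left hyhi, min_eq_left hfy]
    rcases le_or_gt lo y with hloy | hylo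
    · rw [max_eq_right hloy]
      exact le_max_right _ _
    · rw [max_eq_left hylo.le]
      rcases hlo hylo with hflo | hflo
      · exact le_max_of_le_left hflo
      · exact le_max_of_le_right hflo
  · rw [min_eq_right hhiy.le, max_eq_right hle]
    exact le_max_of_le_right (le_min (hf hhiy.le) hhi)

section D

variable {n k l m : ℕ} {a : ℕ → Fin n} {β : Fin n → Fin n}

theorem memD.monotone (hβ : memD n k l m a β) : Monotone β := by
  rcases hβ with h | h <;> exact h.1

theorem memD.exists_index (hβ : memD n k l m a β) (t : Fin n) : ∃ s < k, β t = a s := by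
  rcases hβ with h | h <;> exact h.2.1 t

theorem memD.apply_le (hβ : memD n k l m a β) : β (a m) ≤ a m := by
  rcases hβ with h | h
  · exact h.2.2.2.2
  · exact h.2.2.2

theorem memD.apply_le_or_le_of_lt (hβ : memD n k l m a β) (ha : StrictMonoOn a (Set.Iio k))
    {s : ℕ} (hs : s < k) (hl : l < k) (hsl : a s < a l) :
    β (a l) ≤ a l ∨ β (a l) ≤ β (a s) := by
  rcases hβ with h | h
  · have hsl' : s ≤ l := ((ha.lt_iff_lt hs hl).1 hsl).le
    exact Or.inr (by rw [h.2.2.1 l le_rfl, h.2.2.1 s hsl'])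
  · exact Or.inl h.2.2.1

end D

theorem stmt9_general (n k l m : ℕ) (hlm : l < m) (hmk : m ≤ k - 1)
    (a : ℕ → Fin n) (ha : ∀ p q : ℕ, p < q → q < k → a p < a q)
    (α β : Fin n → Fin n) (hα : memD n k l m a α) (hβ : memD n k l m a β) :
    -- Leibniz rule: ∂(α·β) = ∂(α)·β + α·∂(β), with (α·β)(x) = β(α(x)) and + pointwise max
    proj n l m a (fun x => β (α x))
      = fun x => max (β (proj n l m a α x)) (proj n l m a β (α x)) := by
  have hmk' : m < k := by omega
  have ha' : StrictMonoOn a (Set.Iio k) := fun p _ q hq hpq => ha p q hpq hq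
  funext x
  obtain ⟨s, hs, hx⟩ := hα.exists_index x
  have hclamp : β (proj n l m a α x) ≤ proj n l m a β (α x) := by
    simp only [proj, hx]
    exact hβ.monotone.apply_clamp_le_clamp_apply (ha l m hlm hmk').le hβ.apply_le
      (hβ.apply_le_or_le_of_lt ha' hs (hlm.trans hmk'))
  exact (max_eq_right hclamp).symm

theorem stmt9 (n k l m : ℕ) (hlm : l < m) (hmk : m ≤ k - 1) (hk : 0 < k)
    (a : ℕ → Fin n) (ha : ∀ p q : ℕ, p < q → q < k → a p < a q)
    (α β : Fin n → Fin n) (hα : memD n k l m a α) (hβ : memD n k l m a β) :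
    -- Leibniz rule: ∂(α·β) = ∂(α)·β + α·∂(β), with (α·β)(x) = β(α(x)) and + pointwise max
    proj n l m a (fun x => β (α x))
      = fun x => max (β (proj n l m a α x)) (proj n l m a β (α x)) :=
  stmt9_general n k l m hlm hmk a ha α β hα hβ
end

section
/- Let ∂(α)(t) = max(a_ℓ, min(α(t), a_m)) be the projection on the semiring of monotone self-maps of {0,...,n-1} with image in A = {a_0 < ... < a_{k-1}}, where 0 ≤ ℓ < m ≤ k−1. If β is a monotone self-map with image in A satisfying β(a_m) > a_m, then there exists a monotone self-map α with image in A such that ∂(α·β) ≠ ∂(α)·β + α·∂(β). Consequently D = S ∪ R (as defined from ℓ, m) is the maximal subsemiring on which ∂ is a derivation. -/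
/-!
Testing the Leibniz rule against constant maps suffices. For `α ≡ a_m`, the left side
`∂(α·β)` is squeezed into `[a_ℓ, a_m]`, while the right side is at least `β(a_m)`; so the
rule forces `β(a_m) ≤ a_m`. For `α ≡ a_0`, evaluating at `a_0` forces
`β(a_ℓ) ≤ max(a_ℓ, β(a_0))`: either `β(a_ℓ) ≤ a_ℓ` (so `β ∈ R`), or `β` is constant on
`[a_0, a_ℓ]` with value above `a_ℓ` (so `β ∈ S`). Both constants lie in `S ∪ R`, so any
subsemiring containing `S ∪ R` on which `∂` is a derivation is `S ∪ R` itself.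
-/

def ProjLeibniz (n l m : ℕ) (a : ℕ → Fin n) (f g : Fin n → Fin n) : Prop :=
  proj n l m a (fun x => g (f x)) = fun x => max (g (proj n l m a f x)) (proj n l m a g (f x))

section

variable {n k l m : ℕ} {a : ℕ → Fin n}

theorem not_projLeibniz_const_of_lt {g : Fin n → Fin n} (hlm : a l ≤ a m)
    (hg : a m < g (a m)) : ¬ ProjLeibniz n l m a (fun _ => a m) g := by
  intro h
  have hconst : proj n l m a (fun _ => a m) (a m) = a m := by simp [proj, hlm]
  have hcomp : proj n l m a (fun _ => g (a m)) (a m) = a m := by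
    simp [proj, min_eq_right hg.le, hlm]
  refine hg.not_ge ?_
  calc g (a m) = g (proj n l m a (fun _ => a m) (a m)) := by rw [hconst]
    _ ≤ max (g (proj n l m a (fun _ => a m) (a m))) (proj n l m a g (a m)) := le_max_left _ _
    _ = a m := (congrFun h (a m)).symm.trans hcomp

theorem map_le_max_of_projLeibniz_const {f : Fin n → Fin n} {c : Fin n} (hc : c ≤ a l)
    (h : ProjLeibniz n l m a (fun _ => c) f) : f (a l) ≤ max (a l) (f c) := by
  have hconst : proj n l m a (fun _ => c) c = a l :=
    max_eq_left ((min_le_left _ _).trans hc)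
  calc f (a l) ≤ max (f (a l)) (proj n l m a f c) := le_max_left _ _
    _ = max (f (proj n l m a (fun _ => c) c)) (proj n l m a f c) := by rw [hconst]
    _ = max (a l) (min (f c) (a m)) := (congrFun h c).symm
    _ ≤ max (a l) (f c) := max_le_max le_rfl (min_le_left _ _)

theorem memS_const (ha : StrictMonoOn a (Set.Iio k)) (hlm : l < m) (hmk : m < k) :
    memS n k l m a (fun _ => a m) :=
  ⟨monotone_const, fun _ => ⟨m, hmk, rfl⟩, fun _ _ => rfl,
    (ha.le_iff_le (show l + 1 < k by omega) hmk).2 hlm, le_rfl⟩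

theorem memR_const (ha : StrictMonoOn a (Set.Iio k)) (hlm : l < m) (hmk : m < k) :
    memR n k l m a (fun _ => a 0) :=
  ⟨monotone_const, fun _ => ⟨0, by omega, rfl⟩,
    (ha.le_iff_le (show 0 < k by omega) (show l < k by omega)).2 (Nat.zero_le l),
    (ha.le_iff_le (show 0 < k by omega) hmk).2 (Nat.zero_le m)⟩

theorem memS_or_memR (ha : StrictMonoOn a (Set.Iio k)) (hlk : l < k) {f : Fin n → Fin n}
    (hf : Monotone f) (hfA : ∀ t, ∃ s < k, f t = a s) (hfm : f (a m) ≤ a m)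
    (hfl : f (a l) ≤ max (a l) (f (a 0))) : memS n k l m a f ∨ memR n k l m a f := by
  by_cases hl : f (a l) ≤ a l
  · exact Or.inr ⟨hf, hfA, hl, hfm⟩
  have hl0 : f (a l) ≤ f (a 0) := (le_max_iff.mp hfl).resolve_left hl
  have hle : ∀ p ≤ l, a p ≤ a l := fun p hp =>
    (ha.le_iff_le (show p < k by omega) hlk).2 hp
  have hconst : ∀ p ≤ l, f (a p) = f (a 0) := fun p hp =>
    le_antisymm ((hf (hle p hp)).trans hl0)
      (hf ((ha.le_iff_le (show 0 < k by omega) (show p < k by omega)).2 (Nat.zero_le p)))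
  obtain ⟨s, hs, hfs⟩ := hfA (a l)
  have hls : l < s := (ha.lt_iff_lt hlk hs).1 (hfs ▸ not_le.mp hl)
  have hsucc : a (l + 1) ≤ f (a 0) :=
    calc a (l + 1) ≤ a s := (ha.le_iff_le (show l + 1 < k by omega) hs).2 hls
      _ = f (a l) := hfs.symm
      _ ≤ f (a 0) := hl0
  exact Or.inl ⟨hf, hfA, hconst, hsucc, hfm⟩

end

theorem stmt10_general (n k l m : ℕ) (hlm : l < m) (hmk : m ≤ k - 1)
    (a : ℕ → Fin n) (ha : ∀ p q : ℕ, p < q → q < k → a p < a q)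
    (β : Fin n → Fin n)
    (hβm : a m < β (a m)) :
    -- the Leibniz rule fails for some α in the simplex
    (∃ α : Fin n → Fin n, Monotone α ∧ (∀ t : Fin n, ∃ s < k, α t = a s) ∧
      proj n l m a (fun x => β (α x))
        ≠ fun x => max (β (proj n l m a α x)) (proj n l m a β (α x))) ∧
    -- consequently D = S ∪ R is the maximal subsemiring on which ∂ is a derivation
    (∀ T : Set (Fin n → Fin n),
      (∀ f ∈ T, Monotone f ∧ ∀ t : Fin n, ∃ s < k, f t = a s) →
      {α | memS n k l m a α ∨ memR n k l m a α} ⊆ T →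
      (∀ f ∈ T, ∀ g ∈ T, (fun x => max (f x) (g x)) ∈ T ∧ (fun x => g (f x)) ∈ T) →
      (∀ f ∈ T, ∀ g ∈ T,
        proj n l m a (fun x => g (f x))
          = fun x => max (g (proj n l m a f x)) (proj n l m a g (f x))) →
      T = {α | memS n k l m a α ∨ memR n k l m a α}) := by
  have hmk : m < k := by omega
  have ha : StrictMonoOn a (Set.Iio k) := fun p hp q hq hpq => ha p q hpq hq
  have halm : a l ≤ a m := (ha.le_iff_le (show l < k by omega) hmk).2 hlm.le
  refine ⟨⟨fun _ => a m, monotone_const, fun _ => ⟨m, hmk, rfl⟩,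
    not_projLeibniz_const_of_lt halm hβm⟩, fun T hTA hDT _ hTL => ?_⟩
  refine Set.Subset.antisymm (fun f hf => ?_) hDT
  obtain ⟨hfmono, hfA⟩ := hTA f hf
  have hS : (fun _ => a m) ∈ T := hDT (Or.inl (memS_const ha hlm hmk))
  have hR : (fun _ => a 0) ∈ T := hDT (Or.inr (memR_const ha hlm hmk))
  have hfm : f (a m) ≤ a m := not_lt.mp fun hlt =>
    not_projLeibniz_const_of_lt halm hlt (hTL _ hS f hf)
  have ha0l : a 0 ≤ a l := (ha.le_iff_le (show 0 < k by omega) (show l < k by omega)).2 l.zero_le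
  exact memS_or_memR ha (by omega) hfmono hfA hfm
    (map_le_max_of_projLeibniz_const ha0l (hTL _ hR f hf))

theorem stmt10 (n k l m : ℕ) (hlm : l < m) (hmk : m ≤ k - 1) (hk : 0 < k)
    (a : ℕ → Fin n) (ha : ∀ p q : ℕ, p < q → q < k → a p < a q)
    (β : Fin n → Fin n) (hβ : Monotone β) (hβA : ∀ t : Fin n, ∃ s < k, β t = a s)
    (hβm : a m < β (a m)) :
    -- the Leibniz rule fails for some α in the simplex
    (∃ α : Fin n → Fin n, Monotone α ∧ (∀ t : Fin n, ∃ s < k, α t = a s) ∧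
      proj n l m a (fun x => β (α x))
        ≠ fun x => max (β (proj n l m a α x)) (proj n l m a β (α x))) ∧
    -- consequently D = S ∪ R is the maximal subsemiring on which ∂ is a derivation
    (∀ T : Set (Fin n → Fin n),
      (∀ f ∈ T, Monotone f ∧ ∀ t : Fin n, ∃ s < k, f t = a s) →
      {α | memS n k l m a α ∨ memR n k l m a α} ⊆ T →
      (∀ f ∈ T, ∀ g ∈ T, (fun x => max (f x) (g x)) ∈ T ∧ (fun x => g (f x)) ∈ T) →
      (∀ f ∈ T, ∀ g ∈ T,
        proj n l m a (fun x => g (f x))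
          = fun x => max (g (proj n l m a f x)) (proj n l m a g (f x))) →
      T = {α | memS n k l m a α ∨ memR n k l m a α}) :=
  stmt10_general n k l m hlm hmk a ha β hβm
end

section
/- For the special case ℓ = 0: the set D_m = { α monotone self-map of {0,...,n-1} with image in A : α(a_m) ≤ a_m } is a subsemiring, and the clamping map ∂_m(α)(t) = min(α(t), a_m) satisfies both additivity ∂_m(α+β) = ∂_m(α) + ∂_m(β) and the Leibniz rule ∂_m(α·β) = ∂_m(α)·β + α·∂_m(β) for all α, β ∈ D_m. -/
/-- `D_m` : monotone, image in `A = {a_0 < … < a_{k-1}}`, `α(a_m) ≤ a_m`. -/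
def memDm (n k m : ℕ) (a : ℕ → Fin n) (α : Fin n → Fin n) : Prop :=
  Monotone α ∧ (∀ t : Fin n, ∃ s < k, α t = a s) ∧ α (a m) ≤ a m

/-- The clamping map `∂_m(α)(t) = min(α(t), a_m)`. -/
def projm (n m : ℕ) (a : ℕ → Fin n) (α : Fin n → Fin n) : Fin n → Fin n :=
  fun t => min (α t) (a m)

/-- If `x ≤ c`, both sides are `f x`; otherwise `f c ≤ min (f x) d` absorbs the first term. -/
theorem Monotone.min_apply_eq_max_apply_min {α β : Type*} [LinearOrder α] [LinearOrder β] {f : α → β}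
    {c : α} {d : β} (hf : Monotone f) (hfc : f c ≤ d) (x : α) :
    min (f x) d = max (f (min x c)) (min (f x) d) := by
  rcases le_total x c with hxc | hcx
  · have hfx : f x ≤ d := (hf hxc).trans hfc
    rw [min_eq_left hxc, min_eq_left hfx, max_self]
  · rw [min_eq_right hcx, max_eq_right (le_min (hf hcx) hfc)]

namespace memDm

variable {n k m : ℕ} {a : ℕ → Fin n} {α β : Fin n → Fin n}

theorem max (hα : memDm n k m a α) (hβ : memDm n k m a β) :
    memDm n k m a (fun x => max (α x) (β x)) := by
  obtain ⟨hαmono, hαA, hαm⟩ := hα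
  obtain ⟨hβmono, hβA, hβm⟩ := hβ
  refine ⟨hαmono.max hβmono, fun t => ?_, max_le hαm hβm⟩
  beta_reduce
  rcases max_choice (α t) (β t) with h | h <;> rw [h]
  · exact hαA t
  · exact hβA t

theorem comp (hα : memDm n k m a α) (hβ : memDm n k m a β) :
    memDm n k m a (fun x => β (α x)) :=
  ⟨hβ.1.comp hα.1, fun t => hβ.2.1 (α t), (hβ.1 hα.2.2).trans hβ.2.2⟩

end memDm

theorem projm_max (n m : ℕ) (a : ℕ → Fin n) (α β : Fin n → Fin n) :
    projm n m a (fun x => max (α x) (β x))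
      = fun x => max (projm n m a α x) (projm n m a β x) :=
  funext fun t => min_max_distrib_right (α t) (β t) (a m)

theorem projm_comp {n k m : ℕ} {a : ℕ → Fin n} (α : Fin n → Fin n) {β : Fin n → Fin n}
    (hβ : memDm n k m a β) :
    projm n m a (fun x => β (α x))
      = fun x => max (β (projm n m a α x)) (projm n m a β (α x)) :=
  funext fun t => hβ.1.min_apply_eq_max_apply_min hβ.2.2 (α t)

theorem stmt11_general (n k m : ℕ) (a : ℕ → Fin n)
    (α β : Fin n → Fin n) (hα : memDm n k m a α) (hβ : memDm n k m a β) :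
    -- D_m is closed under pointwise maximum and composition (a subsemiring)
    memDm n k m a (fun x => max (α x) (β x)) ∧
    memDm n k m a (fun x => β (α x)) ∧
    -- additivity: ∂_m(α + β) = ∂_m(α) + ∂_m(β)
    projm n m a (fun x => max (α x) (β x))
      = (fun x => max (projm n m a α x) (projm n m a β x)) ∧
    -- Leibniz rule: ∂_m(α·β) = ∂_m(α)·β + α·∂_m(β), with (α·β)(x) = β(α(x))
    projm n m a (fun x => β (α x))
      = fun x => max (β (projm n m a α x)) (projm n m a β (α x)) :=
  ⟨hα.max hβ, hα.comp hβ, projm_max n m a α β, projm_comp α hβ⟩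

theorem stmt11 (n k m : ℕ) (hm : 0 < m) (hmk : m ≤ k - 1) (hk : 0 < k)
    (a : ℕ → Fin n) (ha : ∀ p q : ℕ, p < q → q < k → a p < a q)
    (α β : Fin n → Fin n) (hα : memDm n k m a α) (hβ : memDm n k m a β) :
    -- D_m is closed under pointwise maximum and composition (a subsemiring)
    memDm n k m a (fun x => max (α x) (β x)) ∧
    memDm n k m a (fun x => β (α x)) ∧
    -- additivity: ∂_m(α + β) = ∂_m(α) + ∂_m(β)
    projm n m a (fun x => max (α x) (β x))
      = (fun x => max (projm n m a α x) (projm n m a β x)) ∧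
    -- Leibniz rule: ∂_m(α·β) = ∂_m(α)·β + α·∂_m(β), with (α·β)(x) = β(α(x))
    projm n m a (fun x => β (α x))
      = fun x => max (β (projm n m a α x)) (projm n m a β (α x)) :=
  stmt11_general n k m a α β hα hβ
end

section
/- The number of monotone self-maps α of the chain {0,1,...,n-1} satisfying α(t) ≤ t for all t is the n-th Catalan number C_n = (1/(n+1))·binomial(2n, n). -/
/-!
A monotone map `a` on `{0,…,n}` with `a t ≤ t` splits at its first positive fixed point `i + 1`
(with `i = n` if there is none). On `{1,…,i}` it lies strictly below the diagonal, so
`t ↦ a (t + 1)` is such a map on `{0,…,i-1}`; on `{i+1,…,n}` it lies above `a (i + 1) = i + 1`,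
so `u ↦ a (u + i + 1) - (i + 1)` is such a map on `{0,…,n-i-1}`. This decomposition is a
bijection, so the counts satisfy Catalan's recurrence `C (n + 1) = ∑ i, C i * C (n - i)`.
-/

/-- Maps on `{0,…,n-1}` are encoded as sequences that vanish from `n` on, so that restricting,
shifting and concatenating them needs no casts between `Fin` types. -/
structure IsSubdiagSeq (n : ℕ) (a : ℕ → ℕ) : Prop where
  monotoneOn : MonotoneOn a (Set.Iio n)
  le_self : ∀ t < n, a t ≤ t
  eq_zero : ∀ t, n ≤ t → a t = 0

def SubdiagSeq (n : ℕ) : Type := {a : ℕ → ℕ // IsSubdiagSeq n a}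

section

variable {n i : ℕ} {a b c : ℕ → ℕ}

theorem IsSubdiagSeq.apply_le_self (h : IsSubdiagSeq n a) (t : ℕ) : a t ≤ t := by
  by_cases ht : t < n
  · exact h.le_self t ht
  · exact (h.eq_zero t (not_lt.mp ht)).trans_le (Nat.zero_le t)

theorem IsSubdiagSeq.apply_zero (h : IsSubdiagSeq n a) : a 0 = 0 :=
  Nat.le_zero.mp (h.apply_le_self 0)

def SubdiagSeq.finEquiv (n : ℕ) :
    {α : Fin n → Fin n // Monotone α ∧ ∀ t, α t ≤ t} ≃ SubdiagSeq n where
  toFun α := ⟨fun t => if ht : t < n then α.1 ⟨t, ht⟩ else 0,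
    { monotoneOn := fun s hs t ht hst => by
        simp only [Set.mem_Iio] at hs ht
        simp only [dif_pos hs, dif_pos ht]
        exact α.2.1 (Fin.mk_le_mk.mpr hst)
      le_self := fun t ht => by
        simp only [dif_pos ht]
        exact α.2.2 ⟨t, ht⟩
      eq_zero := fun t ht => dif_neg (not_lt.mpr ht) }⟩
  invFun a := ⟨fun t => ⟨a.1 t, (a.2.le_self t t.isLt).trans_lt t.isLt⟩,
    fun s t hst => a.2.monotoneOn s.isLt t.isLt hst, fun t => a.2.le_self t t.isLt⟩
  left_inv α := by
    ext t
    simp [t.isLt]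
  right_inv a := by
    refine Subtype.ext (funext fun t => ?_)
    by_cases ht : t < n
    · simp [ht]
    · simp [ht, a.2.eq_zero t (not_lt.mp ht)]

instance (n : ℕ) : Finite (SubdiagSeq n) := Finite.of_equiv _ (SubdiagSeq.finEquiv n)

theorem SubdiagSeq.card_zero : Nat.card (SubdiagSeq 0) = 1 :=
  Nat.card_eq_one_iff_exists.mpr
    ⟨⟨0, fun _ hs => absurd hs (Nat.not_lt_zero _), fun _ ht => absurd ht (Nat.not_lt_zero _),
      fun _ _ => rfl⟩,
     fun a => Subtype.ext (funext fun t => a.2.eq_zero t (Nat.zero_le t))⟩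

structure SplitsAt (n i : ℕ) (a : ℕ → ℕ) : Prop where
  lt_self : ∀ k < i, a (k + 1) ≤ k
  fixed : i < n → a (i + 1) = i + 1

def splitIndex (n : ℕ) (a : ℕ → ℕ) : Fin (n + 1) :=
  ⟨Nat.find (p := fun i => i = n ∨ a (i + 1) = i + 1) ⟨n, Or.inl rfl⟩,
    Nat.lt_succ_of_le (Nat.find_le (Or.inl rfl))⟩

theorem IsSubdiagSeq.splitIndex_eq_iff (h : IsSubdiagSeq (n + 1) a)
    (i : Fin (n + 1)) : splitIndex n a = i ↔ SplitsAt n i a := by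
  have hi := i.is_le
  rw [splitIndex, Fin.ext_iff, Nat.find_eq_iff]
  constructor
  · rintro ⟨hfix, hbelow⟩
    refine ⟨fun k hk => ?_, fun hin => hfix.resolve_left hin.ne⟩
    have := h.le_self (k + 1) (by omega)
    have := hbelow k hk
    omega
  · rintro ⟨hbelow, hfix⟩
    refine ⟨?_, fun k hk => ?_⟩
    · rcases hi.lt_or_eq with hin | hin
      · exact Or.inr (hfix hin)
      · exact Or.inl hin
    · have := hbelow k hk
      omega

def splitLeft (i : ℕ) (a : ℕ → ℕ) : ℕ → ℕ := fun t => if t < i then a (t + 1) else 0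

def splitRight (n i : ℕ) (a : ℕ → ℕ) : ℕ → ℕ :=
  fun u => if u < n - i then a (u + i + 1) - (i + 1) else 0

/-- At `t = 0` this reads `b (0 - 1) = b 0`, which vanishes for the `b` used here. -/
def join (n i : ℕ) (b c : ℕ → ℕ) : ℕ → ℕ :=
  fun t => if t ≤ i then b (t - 1) else if t ≤ n then i + 1 + c (t - i - 1) else 0

theorem isSubdiagSeq_splitLeft (h : IsSubdiagSeq (n + 1) a) (hi : i ≤ n) (hs : SplitsAt n i a) :
    IsSubdiagSeq i (splitLeft i a) where
  monotoneOn s hs' t ht hst := by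
    simp only [Set.mem_Iio] at hs' ht
    simp only [splitLeft, if_pos hs', if_pos ht]
    exact h.monotoneOn (Set.mem_Iio.mpr (by omega)) (Set.mem_Iio.mpr (by omega)) (by omega)
  le_self t ht := by
    simp only [splitLeft, if_pos ht]
    exact hs.lt_self t ht
  eq_zero t ht := if_neg (by omega)

theorem isSubdiagSeq_splitRight (h : IsSubdiagSeq (n + 1) a) :
    IsSubdiagSeq (n - i) (splitRight n i a) where
  monotoneOn s hs t ht hst := by
    simp only [Set.mem_Iio] at hs ht
    simp only [splitRight, if_pos hs, if_pos ht]
    exact Nat.sub_le_sub_right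
      (h.monotoneOn (Set.mem_Iio.mpr (by omega)) (Set.mem_Iio.mpr (by omega)) (by omega)) _
  le_self t ht := by
    simp only [splitRight, if_pos ht]
    have := h.le_self (t + i + 1) (by omega)
    omega
  eq_zero t ht := if_neg (by omega)

theorem isSubdiagSeq_join (hb : IsSubdiagSeq i b) (hc : IsSubdiagSeq (n - i) c) (hi : i ≤ n) :
    IsSubdiagSeq (n + 1) (join n i b c) where
  monotoneOn s hs t ht hst := by
    simp only [Set.mem_Iio] at hs ht
    have hbs := hb.apply_le_self (s - 1)
    simp only [join, if_pos (show t ≤ n by omega), if_pos (show s ≤ n by omega)]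
    by_cases hti : t ≤ i
    · rw [if_pos hti, if_pos (hst.trans hti)]
      rcases hst.eq_or_lt with rfl | hst
      · exact le_rfl
      · exact hb.monotoneOn (Set.mem_Iio.mpr (by omega)) (Set.mem_Iio.mpr (by omega)) (by omega)
    · rw [if_neg hti]
      by_cases hsi : s ≤ i
      · rw [if_pos hsi]
        omega
      · rw [if_neg hsi]
        have := hc.monotoneOn (Set.mem_Iio.mpr (by omega)) (Set.mem_Iio.mpr (by omega))
          (show s - i - 1 ≤ t - i - 1 by omega)
        omega
  le_self t ht := by
    have hbt := hb.apply_le_self (t - 1)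
    have hct := hc.apply_le_self (t - i - 1)
    simp only [join]
    split_ifs <;> omega
  eq_zero t ht := by
    simp only [join]
    rw [if_neg (by omega), if_neg (by omega)]

theorem splitsAt_join (hb : IsSubdiagSeq i b) (hc : IsSubdiagSeq (n - i) c) :
    SplitsAt n i (join n i b c) where
  lt_self k hk := by
    simp only [join, if_pos (show k + 1 ≤ i by omega), Nat.add_sub_cancel]
    exact hb.le_self k hk
  fixed hin := by
    simp only [join, if_neg (show ¬i + 1 ≤ i by omega), if_pos (show i + 1 ≤ n by omega),
      show i + 1 - i - 1 = 0 by omega, hc.apply_zero]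

theorem splitLeft_join (hb : IsSubdiagSeq i b) : splitLeft i (join n i b c) = b := by
  funext t
  by_cases ht : t < i
  · simp only [splitLeft, join, if_pos ht, if_pos (show t + 1 ≤ i by omega), Nat.add_sub_cancel]
  · simp only [splitLeft, if_neg ht, hb.eq_zero t (not_lt.mp ht)]

theorem splitRight_join (hc : IsSubdiagSeq (n - i) c) : splitRight n i (join n i b c) = c := by
  funext u
  by_cases hu : u < n - i
  · simp only [splitRight, join, if_pos hu, if_neg (show ¬u + i + 1 ≤ i by omega),
      if_pos (show u + i + 1 ≤ n by omega), show u + i + 1 - i - 1 = u by omega]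
    omega
  · simp only [splitRight, if_neg hu, hc.eq_zero u (not_lt.mp hu)]

theorem join_splitLeft_splitRight (h : IsSubdiagSeq (n + 1) a) (hs : SplitsAt n i a) :
    join n i (splitLeft i a) (splitRight n i a) = a := by
  funext t
  simp only [join, splitLeft, splitRight]
  rcases Nat.eq_zero_or_pos t with rfl | ht0
  · rw [if_pos (Nat.zero_le i), Nat.zero_sub, zero_add, h.apply_zero]
    split_ifs with hi
    · exact Nat.le_zero.mp (hs.lt_self 0 hi)
    · rfl
  split_ifs with hti hlt htn hu
  · rw [Nat.sub_add_cancel ht0]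
  · omega
  · have hge : i + 1 ≤ a t := (hs.fixed (by omega)).symm.le.trans
      (h.monotoneOn (Set.mem_Iio.mpr (by omega)) (Set.mem_Iio.mpr (by omega)) (by omega))
    rw [show t - i - 1 + i + 1 = t by omega]
    omega
  · omega
  · exact (h.eq_zero t (by omega)).symm

end

def SubdiagSeq.splitEquiv (n : ℕ) (i : Fin (n + 1)) :
    {a : SubdiagSeq (n + 1) // splitIndex n a.1 = i} ≃ SubdiagSeq i × SubdiagSeq (n - i) where
  toFun a := (⟨splitLeft i a.1.1, isSubdiagSeq_splitLeft a.1.2 i.is_le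
      ((a.1.2.splitIndex_eq_iff i).mp a.2)⟩,
    ⟨splitRight n i a.1.1, isSubdiagSeq_splitRight a.1.2⟩)
  invFun bc := ⟨⟨join n i bc.1.1 bc.2.1, isSubdiagSeq_join bc.1.2 bc.2.2 i.is_le⟩,
    ((isSubdiagSeq_join bc.1.2 bc.2.2 i.is_le).splitIndex_eq_iff i).mpr
      (splitsAt_join bc.1.2 bc.2.2)⟩
  left_inv a := Subtype.ext <| Subtype.ext <|
    join_splitLeft_splitRight a.1.2 ((a.1.2.splitIndex_eq_iff i).mp a.2)
  right_inv bc :=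
    Prod.ext (Subtype.ext (splitLeft_join bc.1.2)) (Subtype.ext (splitRight_join bc.2.2))

theorem SubdiagSeq.card_succ (n : ℕ) :
    Nat.card (SubdiagSeq (n + 1)) =
      ∑ i : Fin (n + 1), Nat.card (SubdiagSeq i) * Nat.card (SubdiagSeq (n - i)) := by
  rw [Nat.card_congr
      ((Equiv.sigmaFiberEquiv fun a : SubdiagSeq (n + 1) => splitIndex n a.1).symm.trans
        (Equiv.sigmaCongrRight (splitEquiv n))),
    Nat.card_sigma]
  simp only [Nat.card_prod]

theorem SubdiagSeq.card_eq_catalan (n : ℕ) : Nat.card (SubdiagSeq n) = catalan n := by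
  induction n using Nat.strong_induction_on with
  | _ n ih =>
    cases n with
    | zero => rw [card_zero, catalan_zero]
    | succ n =>
      rw [card_succ, catalan_succ]
      exact Finset.sum_congr rfl fun i _ => by rw [ih i (by omega), ih (n - i) (by omega)]

theorem stmt14 (n : ℕ) :
    Nat.card {α : Fin n → Fin n // Monotone α ∧ ∀ t : Fin n, α t ≤ t}
      = Nat.choose (2 * n) n / (n + 1) := by
  rw [Nat.card_congr (SubdiagSeq.finEquiv n), SubdiagSeq.card_eq_catalan,
    catalan_eq_centralBinom_div, Nat.centralBinom_eq_two_mul_choose]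
end

section
/- The number of monotone self-maps α of the chain {0,1,...,n-1} satisfying α(0) = 0 and α(t) < t for all t = 1,...,n-1 is the (n−1)-th Catalan number, (1/n)·binomial(2n−2, n−1). -/
/-!
Shifting indices, `α ↦ (α 1, …, α (n-1))` identifies the maps in question with the monotone
sequences `f : Fin m → ℕ` (`m = n - 1`) with `f i ≤ i`. Bounding the values by `k` as well gives
the ballot numbers: splitting on whether the last value is `k + 1` yields the Pascal-type
recurrence `B(m+1, k+1) = B(m+1, k) + B(m, k+1)`, whence `B(m, k) = C(m+k, m) - C(m+k, m+1)`
for `k ≤ m`. At `k = m` this difference is the Catalan number `C(2m, m) / (m + 1)`.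
-/

open Set

namespace Fin

variable {n : ℕ} {α : Type*} [Preorder α]

lemma monotone_cons {f : Fin n → α} {a : α} (hf : Monotone f) (ha : ∀ i, a ≤ f i) :
    Monotone (Fin.cons a f : Fin (n + 1) → α) := by
  intro i j hij
  induction j using Fin.cases with
  | zero => rw [Fin.le_zero_iff.mp hij]
  | succ j =>
    induction i using Fin.cases with
    | zero => simpa using ha j
    | succ i => simpa using hf (Fin.succ_le_succ_iff.mp hij)

lemma monotone_snoc {f : Fin n → α} {a : α} (hf : Monotone f) (ha : ∀ i, f i ≤ a) :
    Monotone (Fin.snoc f a : Fin (n + 1) → α) := by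
  intro i j hij
  induction j using Fin.lastCases with
  | last =>
    induction i using Fin.lastCases with
    | last => exact le_rfl
    | cast i => simpa using ha i
  | cast j =>
    induction i using Fin.lastCases with
    | last => exact absurd hij (not_le.mpr (Fin.castSucc_lt_last j))
    | cast i => simpa using hf (Fin.castSucc_le_castSucc_iff.mp hij)

end Fin

def ballotSeqs (m k : ℕ) : Set (Fin m → ℕ) :=
  {f | Monotone f ∧ ∀ i, f i ≤ i ∧ f i ≤ k}

noncomputable def ballotNumber (m k : ℕ) : ℕ := (ballotSeqs m k).ncard

lemma finite_ballotSeqs (m k : ℕ) : (ballotSeqs m k).Finite :=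
  (Finite.pi' fun _ => finite_Iic k).subset fun _ hf i => (hf.2 i).2

lemma ballotNumber_zero_right (m : ℕ) : ballotNumber m 0 = 1 := by
  have : ballotSeqs m 0 = {0} := by
    ext f
    simp only [ballotSeqs, mem_ofPred_eq, nonpos_iff_eq_zero, mem_singleton_iff, funext_iff]
    exact ⟨fun hf i => (hf.2 i).2, fun hf => ⟨fun i j _ => by simp [hf], fun i => by simp [hf]⟩⟩
  rw [ballotNumber, this, ncard_singleton]

lemma ballotNumber_succ_of_le {m k : ℕ} (h : m ≤ k + 1) :
    ballotNumber m (k + 1) = ballotNumber m k := by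
  refine congrArg ncard (ext fun f => and_congr_right fun _ => forall_congr' fun i => ?_)
  have := i.isLt
  omega

lemma ballotSeqs_succ_succ {m k : ℕ} (h : k + 1 ≤ m) :
    ballotSeqs (m + 1) (k + 1) =
      ballotSeqs (m + 1) k ∪ (fun g => Fin.snoc g (k + 1)) '' ballotSeqs m (k + 1) := by
  ext f
  constructor
  · rintro ⟨hmono, hbound⟩
    by_cases hlast : f (Fin.last m) ≤ k
    · exact Or.inl ⟨hmono, fun i => ⟨(hbound i).1, (hmono (Fin.le_last i)).trans hlast⟩⟩
    · refine Or.inr ⟨Fin.init f, ⟨hmono.comp Fin.strictMono_castSucc.monotone,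
        fun i => hbound i.castSucc⟩, ?_⟩
      have hlast_eq : f (Fin.last m) = k + 1 := by have := (hbound (Fin.last m)).2; omega
      exact hlast_eq ▸ Fin.snoc_init_self f
  · rintro (⟨hmono, hbound⟩ | ⟨g, ⟨hmono, hbound⟩, rfl⟩)
    · exact ⟨hmono, fun i => ⟨(hbound i).1, (hbound i).2.trans k.le_succ⟩⟩
    · refine ⟨Fin.monotone_snoc hmono fun i => (hbound i).2, fun i => ?_⟩
      induction i using Fin.lastCases with
      | last => simpa using h
      | cast i => simpa using hbound i

lemma ballotNumber_succ_succ {m k : ℕ} (h : k + 1 ≤ m) :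
    ballotNumber (m + 1) (k + 1) = ballotNumber (m + 1) k + ballotNumber m (k + 1) := by
  have hdisj : Disjoint (ballotSeqs (m + 1) k)
      ((fun g => Fin.snoc g (k + 1)) '' ballotSeqs m (k + 1)) := by
    rw [disjoint_right]
    rintro _ ⟨g, -, rfl⟩ ⟨-, hbound⟩
    simpa using (hbound (Fin.last m)).2
  rw [ballotNumber, ballotSeqs_succ_succ h, ncard_union_eq hdisj (finite_ballotSeqs _ _)
    ((finite_ballotSeqs _ _).image _),
    ncard_image_of_injective _ (Fin.snoc_left_injective (α := fun _ => ℕ) _)]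
  rfl

lemma ballotNumber_add_choose {m k : ℕ} (h : k ≤ m) :
    ballotNumber m k + (m + k).choose (m + 1) = (m + k).choose m := by
  induction m generalizing k with
  | zero => simp [Nat.le_zero.mp h, ballotNumber_zero_right]
  | succ m ihm =>
    induction k with
    | zero => simp [ballotNumber_zero_right]
    | succ k ihk =>
      have hk : ballotNumber (m + 1) k + (m + k + 1).choose (m + 1 + 1) =
          (m + k + 1).choose (m + 1) := by
        rw [Nat.add_right_comm m k]; exact ihk (by omega)
      have pascal₁ := Nat.choose_succ_succ' (m + k + 1) (m + 1)
      have pascal₂ := Nat.choose_succ_succ' (m + k + 1) m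
      rw [show m + 1 + (k + 1) = m + k + 1 + 1 by ring]
      rcases (show k + 1 ≤ m ∨ k = m by omega) with hkm | rfl
      · have hm : ballotNumber m (k + 1) + (m + k + 1).choose (m + 1) =
            (m + k + 1).choose m := ihm hkm
        rw [ballotNumber_succ_succ hkm]
        omega
      · have hsymm : (k + k + 1).choose k = (k + k + 1).choose (k + 1) :=
          Nat.choose_symm_of_eq_add (by ring)
        rw [ballotNumber_succ_of_le le_rfl]
        omega

lemma ballotNumber_self (m : ℕ) : ballotNumber m m = catalan m := by
  have hform := ballotNumber_add_choose (le_refl m)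
  have hpascal : (m + m).choose (m + 1) * (m + 1) = (m + m).choose m * m := by
    simpa using Nat.choose_succ_right_eq (m + m) m
  have hcat := succ_mul_catalan_eq_centralBinom m
  rw [Nat.centralBinom_eq_two_mul_choose, two_mul] at hcat
  apply Nat.eq_of_mul_eq_mul_left m.succ_pos
  nlinarith

def subdiagonalEquivBallotSeqs (m : ℕ) :
    {α : Fin (m + 1) → Fin (m + 1) //
        Monotone α ∧ α 0 = 0 ∧ ∀ t : Fin (m + 1), 1 ≤ t.val → (α t).val < t.val} ≃
      ballotSeqs m m where
  toFun α := ⟨fun i => α.1 i.succ,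
    fun i j hij => Fin.val_fin_le.mpr (α.2.1 (Fin.succ_le_succ_iff.mpr hij)),
    fun i => by
      have := α.2.2.2 i.succ (by simp)
      simp only [Fin.val_succ] at this
      show (α.1 i.succ : ℕ) ≤ i ∧ (α.1 i.succ : ℕ) ≤ m
      omega⟩
  invFun g := ⟨Fin.cons 0 fun i => ⟨g.1 i, by have := (g.2.2 i).1; omega⟩,
    Fin.monotone_cons (fun i j hij => Fin.val_fin_le.mp (g.2.1 hij)) fun _ => Fin.zero_le _,
    rfl, fun t ht => by
      induction t using Fin.cases with
      | zero => simp at ht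
      | succ t => simpa [Nat.lt_succ_iff] using (g.2.2 t).1⟩
  left_inv α := by
    ext t : 2
    induction t using Fin.cases with
    | zero => exact α.2.2.1.symm
    | succ t => rfl
  right_inv g := rfl

theorem stmt15 (n : ℕ) (hn : 0 < n) :
    Nat.card {α : Fin n → Fin n //
        Monotone α ∧ α ⟨0, hn⟩ = ⟨0, hn⟩ ∧ ∀ t : Fin n, 1 ≤ t.val → (α t).val < t.val}
      = Nat.choose (2 * n - 2) (n - 1) / n := by
  obtain ⟨m, rfl⟩ : ∃ m, n = m + 1 := ⟨n - 1, by omega⟩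
  rw [show 2 * (m + 1) - 2 = 2 * m by omega, Nat.add_sub_cancel,
    ← Nat.centralBinom_eq_two_mul_choose, ← catalan_eq_centralBinom_div, ← ballotNumber_self]
  simp only [Fin.zero_eta]
  exact Nat.card_congr (subdiagonalEquivBallotSeqs m)
end
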